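/- arXiv:2010.10578 — 6 statements merged into one kernel-verified Lean document; each statement's English description precedes it below -/
import Mathlib

section
/- Let L(U,F,H) be a connected pseudograph whose normal subgraph G(U,F) is a tree. Then the number of valid orientations (orientations of F in which every vertex of L has outdegree exactly 2, hanging edges counting as outgoing) is at most 1. -/
open SimpleGraph


/-- Let `L(U,F,H)` be a connected pseudograph (normal subgraph `G` on vertex
type `V`, hanging edges `H` with endpoint map `hend`) whose normal subgraph is
a tree. A valid orientation assigns to every normal edge a source vertex
(one of its endpoints) so that each vertex has outdegree exactly 2, hanging
edges counting as outgoing. Then the number of valid orientations is at most 1. -/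
theorem tree_pseudograph_at_most_one_valid_orientation
    {V H : Type*} [Fintype V] [Fintype H]
    (G : SimpleGraph V) (hend : H → V)
    (htree : G.IsTree) :
    Set.ncard {o : G.edgeSet → V |
      (∀ e : G.edgeSet, o e ∈ (e : Sym2 V)) ∧
      ∀ v : V, Set.ncard {e : G.edgeSet | o e = v}
        + Set.ncard {h : H | hend h = v} = 2} ≤ 1 := by
  classical
  rw [Set.ncard_le_one_iff (Set.toFinite _)]
  rintro o₁ o₂ ⟨he₁, hv₁⟩ ⟨he₂, hv₂⟩
  by_contra hne
  have hDne : ∃ e, o₁ e ≠ o₂ e := by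
    by_contra h; push_neg at h; exact hne (funext h)
  -- For every vertex, the number of edges oriented out of it is the same for o₁ and o₂.
  have key : ∀ v : V, (Finset.univ.filter fun e : G.edgeSet => o₁ e = v).card
      = (Finset.univ.filter fun e : G.edgeSet => o₂ e = v).card := by
    intro v
    have h1 := hv₁ v
    have h2 := hv₂ v
    have h3 : {e : G.edgeSet | o₁ e = v}.ncard = {e : G.edgeSet | o₂ e = v}.ncard := by omega
    rwa [Set.ncard_eq_toFinset_card', Set.ncard_eq_toFinset_card',
      Set.toFinset_setOf, Set.toFinset_setOf] at h3
  -- Among edges where the orientations differ, in/out counts match at each vertex.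
  have countD : ∀ v : V,
      (Finset.univ.filter fun e : G.edgeSet => o₁ e = v ∧ ¬ o₁ e = o₂ e).card
      = (Finset.univ.filter fun e : G.edgeSet => o₂ e = v ∧ ¬ o₁ e = o₂ e).card := by
    intro v
    have ha := Finset.card_filter_add_card_filter_not
      (s := Finset.univ.filter fun e : G.edgeSet => o₁ e = v)
      (p := fun e => o₁ e = o₂ e)
    have hb := Finset.card_filter_add_card_filter_not
      (s := Finset.univ.filter fun e : G.edgeSet => o₂ e = v)
      (p := fun e => o₁ e = o₂ e)
    rw [Finset.filter_filter, Finset.filter_filter] at ha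
    rw [Finset.filter_filter, Finset.filter_filter] at hb
    have hagree : (Finset.univ.filter fun e : G.edgeSet => o₁ e = v ∧ o₁ e = o₂ e)
        = (Finset.univ.filter fun e : G.edgeSet => o₂ e = v ∧ o₁ e = o₂ e) := by
      ext e
      simp only [Finset.mem_filter, Finset.mem_univ, true_and]
      constructor
      · rintro ⟨h1, h2⟩; exact ⟨h2.symm.trans h1, h2⟩
      · rintro ⟨h1, h2⟩; exact ⟨h2.trans h1, h2⟩
    have hc := congrArg Finset.card hagree
    have hk := key v
    omega
  -- From any differing edge we can step to another differing edge continuing the walk.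
  have step : ∀ p : {e : G.edgeSet // o₁ e ≠ o₂ e},
      ∃ q : {e : G.edgeSet // o₁ e ≠ o₂ e}, o₁ q.1 = o₂ p.1 := by
    rintro ⟨e, he⟩
    have hmem : e ∈ Finset.univ.filter
        fun f : G.edgeSet => o₂ f = o₂ e ∧ ¬ o₁ f = o₂ f := by
      simp [he]
    have hpos : 0 < (Finset.univ.filter
        fun f : G.edgeSet => o₂ f = o₂ e ∧ ¬ o₁ f = o₂ f).card :=
      Finset.card_pos.2 ⟨e, hmem⟩
    rw [← countD (o₂ e)] at hpos
    obtain ⟨f, hf⟩ := Finset.card_pos.1 hpos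
    simp only [Finset.mem_filter, Finset.mem_univ, true_and] at hf
    exact ⟨⟨f, hf.2⟩, hf.1⟩
  choose nxt hnxt using step
  obtain ⟨e₀, he₀⟩ := hDne
  set seq : ℕ → {e : G.edgeSet // o₁ e ≠ o₂ e} := fun n => nxt^[n] ⟨e₀, he₀⟩ with hseq
  set b : ℕ → V := fun n => o₁ (seq n).1 with hbdef
  have hb : ∀ n, o₂ (seq n).1 = b (n + 1) := by
    intro n
    have : seq (n + 1) = nxt (seq n) := Function.iterate_succ_apply' nxt n _
    rw [hbdef]; simp only []
    rw [this]
    exact (hnxt (seq n)).symm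
  have hbne : ∀ n, b n ≠ b (n + 1) := by
    intro n
    rw [← hb n]
    exact (seq n).2
  have hsym : ∀ n, ((seq n).1 : Sym2 V) = s(b n, b (n + 1)) := by
    intro n
    rw [← hb n]
    exact (Sym2.mem_and_mem_iff (seq n).2).1 ⟨he₁ (seq n).1, he₂ (seq n).1⟩
  have hadj : ∀ n, G.Adj (b (n + 1)) (b n) := by
    intro n
    have hm := (seq n).1.2
    rw [hsym n, G.mem_edgeSet] at hm
    exact hm.symm
  -- Build the walk b n, b (n-1), ..., b 0.
  let W : ∀ n, G.Walk (b n) (b 0) :=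
    fun n => Nat.rec Walk.nil (fun m w => Walk.cons (hadj m) w) n
  have hlen : ∀ n, (W n).length = n := by
    intro n
    induction n with
    | zero => rfl
    | succ m ih =>
      show (Walk.cons (hadj m) (W m)).length = m + 1
      rw [Walk.length_cons, ih]
  have hpath : ∀ n, (W n).IsPath := by
    intro n
    induction n with
    | zero => exact Walk.IsPath.nil
    | succ m ih =>
      show (Walk.cons (hadj m) (W m)).IsPath
      rw [Walk.cons_isPath_iff]
      refine ⟨ih, fun hmem => ?_⟩
      have hp : ((W m).takeUntil (b (m + 1)) hmem).IsPath := ih.takeUntil hmem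
      have hq : (Walk.cons ((hadj m).symm) Walk.nil : G.Walk (b m) (b (m + 1))).IsPath := by
        rw [Walk.cons_isPath_iff]
        refine ⟨Walk.IsPath.nil, ?_⟩
        simp only [Walk.support_nil, List.mem_singleton]
        exact hbne m
      have huniq := htree.IsAcyclic.path_unique ⟨_, hp⟩ ⟨_, hq⟩
      have heq : (W m).takeUntil (b (m + 1)) hmem
          = Walk.cons ((hadj m).symm) Walk.nil := Subtype.ext_iff.mp huniq
      have hspec := (W m).take_spec hmem
      rw [heq, Walk.cons_append, Walk.nil_append] at hspec
      cases m with
      | zero =>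
        have hl := congrArg Walk.length hspec
        rw [Walk.length_cons] at hl
        have : (W 0).length = 0 := hlen 0
        omega
      | succ k =>
        have hs := congrArg Walk.support hspec
        have hW1 : (W (k + 1)).support = b (k + 1) :: (W k).support := by
          rw [show W (k + 1) = Walk.cons (hadj k) (W k) from rfl, Walk.support_cons]
        rw [Walk.support_cons, hW1] at hs
        have htail : ((W (k + 1)).dropUntil (b (k + 1 + 1)) hmem).support
            = (W k).support := (List.cons.injEq _ _ _ _).mp hs |>.2
        rw [Walk.support_eq_cons ((W (k + 1)).dropUntil (b (k + 1 + 1)) hmem),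
          Walk.support_eq_cons (W k)] at htail
        have hhead : b (k + 1 + 1) = b k := (List.cons.injEq _ _ _ _).mp htail |>.1
        have hE : ((seq (k + 1)).1 : Sym2 V) = ((seq k).1 : Sym2 V) := by
          rw [hsym (k + 1), hsym k, hhead]
          exact Sym2.eq_swap
        have hseqeq : (seq (k + 1)).1 = (seq k).1 := Subtype.ext hE
        have hbb : b (k + 1) = b k := congrArg o₁ hseqeq
        exact (hbne k) hbb.symm
  have hcontra := (hpath (Fintype.card V)).length_lt
  rw [hlen] at hcontra
  exact lt_irrefl _ hcontra
end

section
/- In a connected graph G in which every vertex of degree other than 2 is a cut-vertex and there exists at least one non-cut vertex, every non-cut vertex has degree exactly 2, and there exist two adjacent non-cut vertices (both of degree 2). -/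
/-- A vertex `v` of a graph `G` is a cut-vertex if deleting it disconnects
the graph, i.e. the induced graph on the complement of `{v}` is not connected. -/
def SimpleGraph.IsCutVertex' {V : Type*} (G : SimpleGraph V) (v : V) : Prop :=
  ¬ (G.induce {u | u ≠ v}).Connected

/-!
Among all pairs `(c, w)` with `w ≠ c`, pick one for which the component `K` of `w` in `G - c` is
smallest. No vertex `v` of `K` is a cut-vertex: otherwise some component of `G - v` avoids `c`;
it contains a neighbour of `v`, hence lies in `K \ {v}`, contradicting minimality. So `w` has
degree 2, and of its two neighbours only `c` can lie outside `K`.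
-/

namespace SimpleGraph

variable {V : Type*} {G : SimpleGraph V}

lemma not_reachable_deleteIncidenceSet {c u : V} (hu : u ≠ c) :
    ¬ (G.deleteIncidenceSet c).Reachable u c := by
  rintro ⟨p⟩
  cases p.reverse with
  | nil => exact hu rfl
  | cons h _ => exact (deleteIncidenceSet_adj.1 h).2.1 rfl

-- `G.deleteIncidenceSet c` stands for `G - c`: it keeps `c` as an isolated vertex, so that the
-- components of `G - c` are sets of vertices of `G`.
lemma reachable_induce_ne_iff {c u w : V} (hu : u ≠ c) (hw : w ≠ c) :
    (G.induce {x | x ≠ c}).Reachable ⟨u, hu⟩ ⟨w, hw⟩ ↔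
      (G.deleteIncidenceSet c).Reachable u w := by
  rw [← G.induce_deleteIncidenceSet_of_notMem (s := {x | x ≠ c}) fun h => h rfl]
  refine ⟨fun h => h.map (Embedding.induce _).toHom, fun ⟨p⟩ => ⟨p.induce _ ?_⟩⟩
  rintro x hx rfl
  classical
  exact not_reachable_deleteIncidenceSet hu ⟨p.takeUntil _ hx⟩

lemma isCutVertex'_iff {v c : V} (hc : c ≠ v) :
    G.IsCutVertex' v ↔ ∃ u ≠ v, ¬ (G.deleteIncidenceSet v).Reachable u c := by
  rw [IsCutVertex', not_iff_comm]
  push Not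
  rw [connected_iff_exists_forall_reachable]
  constructor
  · intro h
    exact ⟨⟨c, hc⟩, fun ⟨w, hw⟩ => (reachable_induce_ne_iff hc hw).2 (h w hw).symm⟩
  · rintro ⟨b, hb⟩ u hu
    exact (reachable_induce_ne_iff hu hc).1 ((hb ⟨u, hu⟩).symm.trans (hb ⟨c, hc⟩))

lemma Reachable.deleteIncidenceSet {c u y : V} (h : G.Reachable u y) (hc : ¬ G.Reachable u c) :
    (G.deleteIncidenceSet c).Reachable u y := by
  obtain ⟨p⟩ := h
  induction p with
  | nil => rfl
  | @cons u u' y hadj p ih =>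
    have hu' : ¬ G.Reachable u' c := fun h => hc (hadj.reachable.trans h)
    have hadj' : (G.deleteIncidenceSet c).Adj u u' :=
      deleteIncidenceSet_adj.2 ⟨hadj, fun h => hc (h ▸ .rfl), fun h => hu' (h ▸ .rfl)⟩
    exact hadj'.reachable.trans (ih hu')

lemma deleteIncidenceSet_deleteIncidenceSet_le (v c : V) :
    (G.deleteIncidenceSet v).deleteIncidenceSet c ≤ G.deleteIncidenceSet c := by
  intro x y
  simp only [deleteIncidenceSet_adj]
  tauto

lemma Connected.exists_adj_reachable_deleteIncidenceSet (hG : G.Connected) {v w : V}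
    (hw : w ≠ v) : ∃ a, G.Adj a v ∧ (G.deleteIncidenceSet v).Reachable w a := by
  obtain ⟨p⟩ := hG w v
  induction p with
  | nil => exact absurd rfl hw
  | @cons w u v hadj p ih =>
    by_cases hu : u = v
    · exact ⟨w, hu ▸ hadj, .rfl⟩
    · obtain ⟨a, hav, hua⟩ := ih hu
      exact ⟨a, hav, (deleteIncidenceSet_adj.2 ⟨hadj, hw, hu⟩).reachable.trans hua⟩

lemma Connected.ncard_reachable_deleteIncidenceSet_lt [Finite V] (hG : G.Connected)
    {c v w w' : V} (hvc : v ≠ c) (hv : (G.deleteIncidenceSet c).Reachable w v) (hw' : w' ≠ v)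
    (hc : ¬ (G.deleteIncidenceSet v).Reachable w' c) :
    {u | (G.deleteIncidenceSet v).Reachable w' u}.ncard <
      {u | (G.deleteIncidenceSet c).Reachable w u}.ncard := by
  obtain ⟨a, hav, hw'a⟩ := hG.exists_adj_reachable_deleteIncidenceSet hw'
  have hac : a ≠ c := fun h => hc (h ▸ hw'a)
  have hva : (G.deleteIncidenceSet c).Adj v a := deleteIncidenceSet_adj.2 ⟨hav.symm, hvc, hac⟩
  refine Set.ncard_lt_ncard ⟨fun u hu => ?_, fun hsub => ?_⟩
  · have hau : ((G.deleteIncidenceSet v).deleteIncidenceSet c).Reachable a u :=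
      (hw'a.symm.trans hu).deleteIncidenceSet fun h => hc (hw'a.trans h)
    exact hv.trans (hva.reachable.trans (hau.mono (deleteIncidenceSet_deleteIncidenceSet_le v c)))
  · exact not_reachable_deleteIncidenceSet hw' (hsub hv)

lemma Connected.exists_forall_reachable_deleteIncidenceSet_not_isCutVertex' [Finite V]
    [Nontrivial V] (hG : G.Connected) :
    ∃ c w : V, w ≠ c ∧ ∀ v, (G.deleteIncidenceSet c).Reachable w v → ¬ G.IsCutVertex' v := by
  obtain ⟨c₀, w₀, h₀⟩ := exists_pair_ne V
  obtain ⟨⟨c, w⟩, hwc, hmin⟩ := Set.exists_min_image {p : V × V | p.2 ≠ p.1}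
    (fun p => {u | (G.deleteIncidenceSet p.1).Reachable p.2 u}.ncard) (Set.toFinite _)
    ⟨(c₀, w₀), h₀.symm⟩
  refine ⟨c, w, hwc, fun v hv hvcut => ?_⟩
  have hvc : v ≠ c := fun h => not_reachable_deleteIncidenceSet hwc (h ▸ hv)
  obtain ⟨w', hw', hw'c⟩ := (isCutVertex'_iff hvc.symm).1 hvcut
  exact (hmin (v, w') hw').not_gt (hG.ncard_reachable_deleteIncidenceSet_lt hvc hv hw' hw'c)

end SimpleGraph

open SimpleGraph

theorem exists_adjacent_noncut_degree_two_general
    {V : Type*} [Fintype V]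
    (G : SimpleGraph V) [DecidableRel G.Adj]
    (hconn : G.Connected) (hcard : 2 ≤ Fintype.card V)
    (hcut : ∀ v : V, G.degree v ≠ 2 → G.IsCutVertex' v) :
    (∀ v : V, ¬ G.IsCutVertex' v → G.degree v = 2) ∧
    ∃ u v : V, G.Adj u v ∧ ¬ G.IsCutVertex' u ∧ ¬ G.IsCutVertex' v ∧
      G.degree u = 2 ∧ G.degree v = 2 := by
  have hdeg (v : V) (hv : ¬ G.IsCutVertex' v) : G.degree v = 2 := by_contra (hv ∘ hcut v)
  have : Nontrivial V := Fintype.one_lt_card_iff_nontrivial.1 hcard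
  obtain ⟨c, w, hwc, hnoncut⟩ := hconn.exists_forall_reachable_deleteIncidenceSet_not_isCutVertex'
  have hw := hnoncut w .rfl
  obtain ⟨y, hy, hyc⟩ := (G.neighborFinset w).exists_mem_ne (by simp [hdeg w hw]) c
  rw [mem_neighborFinset] at hy
  have hy' := hnoncut y (deleteIncidenceSet_adj.2 ⟨hy, hwc, hyc⟩).reachable
  exact ⟨hdeg, w, y, hy, hw, hy', hdeg w hw, hdeg y hy'⟩

/-- Let `G` be a finite connected simple graph with at least two vertices in
which every vertex of degree other than 2 is a cut-vertex, and which has at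
least one non-cut vertex. Then every non-cut vertex has degree exactly 2, and
there exist two adjacent non-cut vertices (both of degree 2). -/
theorem exists_adjacent_noncut_degree_two
    {V : Type*} [Fintype V] [DecidableEq V]
    (G : SimpleGraph V) [DecidableRel G.Adj]
    (hconn : G.Connected) (hcard : 2 ≤ Fintype.card V)
    (hcut : ∀ v : V, G.degree v ≠ 2 → G.IsCutVertex' v)
    (hex : ∃ v : V, ¬ G.IsCutVertex' v) :
    (∀ v : V, ¬ G.IsCutVertex' v → G.degree v = 2) ∧
    ∃ u v : V, G.Adj u v ∧ ¬ G.IsCutVertex' u ∧ ¬ G.IsCutVertex' v ∧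
      G.degree u = 2 ∧ G.degree v = 2 :=
  exists_adjacent_noncut_degree_two_general G hconn hcard hcut
end

section
/- For α = 24^{1/5} and β = 18^{-1/5}, the quantity C(p,h) = (p-h choose 2-h) · α^{-1} · β^{p-h-2} satisfies C(p,h) ≤ 1 for all integers p, h with p ≥ 2, 0 ≤ h ≤ 2, and (p,h) ≠ (3,1) and (p,h) ≠ (2,2). -/
-- nat lemma for h=1 tail: (n+2)^5 ≤ 24·18^n for n ≥ 1
lemma lemA (n : ℕ) (hn : 1 ≤ n) : (n+2)^5 ≤ 24 * 18^n := by
  induction n with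
  | zero => omega
  | succ m ih =>
    rcases Nat.eq_or_lt_of_le hn with h1 | h1
    · norm_num [← h1]
    · have hm : 1 ≤ m := by omega
      have h2 : (m+3)^5 ≤ 18 * (m+2)^5 :=
        Nat.le.intro (k := 17*m^5+165*m^4+630*m^3+1170*m^2+1035*m+333) (by ring)
      calc (m+1+2)^5 = (m+3)^5 := by ring_nf
        _ ≤ 18 * (m+2)^5 := h2
        _ ≤ 18 * (24 * 18^m) := by exact Nat.mul_le_mul_left _ (ih hm)
        _ = 24 * 18^(m+1) := by ring

-- step for h=0 tail
lemma lemBstep (m : ℕ) : ((m+4)*(m+3))^5 ≤ 768 * 18^(m+2) := by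
  induction m with
  | zero => norm_num
  | succ k ih =>
    have h2 : (k+5)^5 ≤ 18 * (k+3)^5 :=
      Nat.le.intro (k := 17*k^5+245*k^4+1370*k^3+3610*k^2+4165*k+1249) (by ring)
    calc ((k+1+4)*(k+1+3))^5 = (k+5)^5 * (k+4)^5 := by ring
      _ ≤ (18 * (k+3)^5) * (k+4)^5 := Nat.mul_le_mul_right _ h2
      _ = 18 * ((k+4)*(k+3))^5 := by ring
      _ ≤ 18 * (768 * 18^(k+2)) := Nat.mul_le_mul_left _ ih
      _ = 768 * 18^(k+1+2) := by ring

lemma lemB (n : ℕ) : ((n+2).choose 2)^5 ≤ 24 * 18^n := by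
  have h2c : ∀ m : ℕ, 2 * (m+2).choose 2 = (m+2)*(m+1) := by
    intro m
    induction m with
    | zero => rfl
    | succ k ih =>
      have hp : (k+3).choose 2 = (k+2).choose 1 + (k+2).choose 2 :=
        Nat.choose_succ_succ (k+2) 1
      rw [show k+1+2 = k+3 from rfl, hp, Nat.choose_one_right, Nat.mul_add, ih]
      ring
  have h2c := h2c n
  have key : ((n+2)*(n+1))^5 ≤ 768 * 18^n := by
    match n with
    | 0 => norm_num
    | 1 => norm_num
    | (m+2) =>
      have := lemBstep m
      calc ((m+2+2)*(m+2+1))^5 = ((m+4)*(m+3))^5 := by ring_nf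
        _ ≤ 768 * 18^(m+2) := this
  have h32 : 32 * ((n+2).choose 2)^5 ≤ 32 * (24 * 18^n) := by
    calc 32 * ((n+2).choose 2)^5 = (2 * (n+2).choose 2)^5 := by ring
      _ = ((n+2)*(n+1))^5 := by rw [h2c]
      _ ≤ 768 * 18^n := key
      _ = 32 * (24 * 18^n) := by ring
  exact Nat.le_of_mul_le_mul_left h32 (by norm_num)

-- real reduction lemma
lemma keyR (N : ℕ) (e : ℝ) (h : (N:ℝ)^5 ≤ 24 * (18:ℝ)^e) :
    (N:ℝ) * ((24 : ℝ) ^ ((1 : ℝ) / 5))⁻¹ * ((18 : ℝ) ^ (-(1 : ℝ) / 5)) ^ e ≤ 1 := by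
  set x := (N:ℝ) * ((24 : ℝ) ^ ((1 : ℝ) / 5))⁻¹ * ((18 : ℝ) ^ (-(1 : ℝ) / 5)) ^ e with hx
  have hxnn : 0 ≤ x := by positivity
  have h24 : ((24 : ℝ) ^ ((1 : ℝ) / 5))^(5:ℕ) = 24 := by
    rw [← Real.rpow_natCast ((24:ℝ)^((1:ℝ)/5)) 5, ← Real.rpow_mul (by norm_num : (0:ℝ) ≤ 24)]
    norm_num
  have h18 : (((18 : ℝ) ^ (-(1 : ℝ) / 5)) ^ e)^(5:ℕ) = ((18:ℝ)^e)⁻¹ := by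
    rw [← Real.rpow_natCast (((18:ℝ)^(-(1:ℝ)/5))^e) 5,
        ← Real.rpow_mul (by positivity), ← Real.rpow_mul (by norm_num : (0:ℝ) ≤ 18)]
    rw [show -(1:ℝ)/5 * (e * (5:ℕ)) = -e by push_cast; ring]
    rw [Real.rpow_neg (by norm_num : (0:ℝ) ≤ 18)]
  have hx5 : x^5 ≤ 1 := by
    have hpos : (0:ℝ) < (18:ℝ)^e := Real.rpow_pos_of_pos (by norm_num) e
    have : x^5 = (N:ℝ)^5 * 24⁻¹ * ((18:ℝ)^e)⁻¹ := by
      rw [hx, mul_pow, mul_pow, inv_pow, h24, h18]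
    rw [this]
    rw [show (N:ℝ)^5 * 24⁻¹ * ((18:ℝ)^e)⁻¹ = (N:ℝ)^5 / (24 * (18:ℝ)^e) by ring]
    rw [div_le_one (by positivity)]
    simpa using h
  exact (pow_le_one_iff_of_nonneg hxnn (by norm_num)).mp hx5

/-- For `α = 24^(1/5)` and `β = 18^(-1/5)`, the quantity
`C(p,h) = (p-h choose 2-h) · α⁻¹ · β^(p-h-2)` satisfies `C(p,h) ≤ 1`
for all integers `p ≥ 2`, `0 ≤ h ≤ 2` with `(p,h) ≠ (3,1)` and `(p,h) ≠ (2,2)`. -/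
theorem elimination_cost_inequality
    (p h : ℕ) (hp : 2 ≤ p) (hh : h ≤ 2)
    (h31 : ¬ (p = 3 ∧ h = 1)) (h22 : ¬ (p = 2 ∧ h = 2)) :
    ((p - h).choose (2 - h) : ℝ) * ((24 : ℝ) ^ ((1 : ℝ) / 5))⁻¹ *
      ((18 : ℝ) ^ (-(1 : ℝ) / 5)) ^ ((p : ℝ) - (h : ℝ) - 2) ≤ 1 := by
  interval_cases h
  · -- h = 0
    obtain ⟨n, rfl⟩ : ∃ n, p = n + 2 := ⟨p - 2, by omega⟩
    have he : ((n+2:ℕ) : ℝ) - (0:ℕ) - 2 = ((n:ℕ):ℝ) := by push_cast; ring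
    rw [he]
    apply keyR
    rw [Real.rpow_natCast]
    have := lemB n
    calc (((n+2:ℕ) - 0).choose (2-0) : ℝ)^5 = (((n+2).choose 2 : ℕ):ℝ)^5 := by norm_num
      _ = ((((n+2).choose 2)^5 : ℕ) : ℝ) := by push_cast; ring
      _ ≤ ((24 * 18^n : ℕ) : ℝ) := by exact_mod_cast this
      _ = 24 * (18:ℝ)^n := by push_cast; ring
  · -- h = 1
    rcases Nat.lt_or_ge p 4 with hlt | hge
    · have hp2 : p = 2 := by omega
      subst hp2
      have he : ((2:ℕ) : ℝ) - (1:ℕ) - 2 = (-1 : ℝ) := by norm_num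
      rw [he]
      apply keyR
      rw [Real.rpow_neg_one]
      norm_num
    · obtain ⟨n, rfl⟩ : ∃ n, p = n + 3 := ⟨p - 3, by omega⟩
      have hn : 1 ≤ n := by omega
      have he : ((n+3:ℕ) : ℝ) - (1:ℕ) - 2 = ((n:ℕ):ℝ) := by push_cast; ring
      rw [he]
      apply keyR
      rw [Real.rpow_natCast]
      have hA := lemA n hn
      have hch : ((n+3:ℕ) - 1).choose (2-1) = n + 2 := by
        simp [Nat.choose_one_right]
      rw [hch]
      calc ((n+2:ℕ):ℝ)^5 = (((n+2)^5 : ℕ):ℝ) := by push_cast; ring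
        _ ≤ ((24 * 18^n : ℕ):ℝ) := by exact_mod_cast hA
        _ = 24 * (18:ℝ)^n := by push_cast; ring
  · -- h = 2
    have hp3 : 3 ≤ p := by omega
    rcases Nat.lt_or_ge p 4 with hlt | hge
    · have hp3' : p = 3 := by omega
      subst hp3'
      have he : ((3:ℕ) : ℝ) - (2:ℕ) - 2 = (-1 : ℝ) := by norm_num
      rw [he]
      apply keyR
      rw [Real.rpow_neg_one]
      norm_num
    · obtain ⟨n, rfl⟩ : ∃ n, p = n + 4 := ⟨p - 4, by omega⟩
      have he : ((n+4:ℕ) : ℝ) - (2:ℕ) - 2 = ((n:ℕ):ℝ) := by push_cast; ring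
      rw [he]
      apply keyR
      rw [Real.rpow_natCast]
      have hch : ((n+4:ℕ) - 2).choose (2-2) = 1 := by simp
      rw [hch]
      have h1 : (1:ℝ) ≤ (18:ℝ)^n := one_le_pow₀ (by norm_num)
      push_cast
      nlinarith
end

section
/- For every connected pseudograph with n vertices and k hanging edges, the number of constrained orientations in which every vertex has outdegree exactly 2 is at most 2^{k/2} · 24^{(2n-k)/4} · 2^{-n} ≈ 2.4495^n · 0.6389^k (the Brègman–Minc permanent bound applied to the doubled incidence matrix). -/
/-!
Write `m` for the number of normal edges. Each vertex has total outdegree 2, so `m + k = 2n` as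
soon as a valid orientation exists, and then the right-hand side equals `6^(m/4)`. That is the
Brègman–Minc bound for the doubled incidence matrix, but it also follows by a direct induction on
`m`, for orientations with any prescribed outdegrees `c ≤ 2`: the degrees sum to at most `2m`
while the outdegrees sum to `m`, so some vertex `v` of positive outdegree has degree `r ≤ 4`.
Choosing which of its `r` edges leave `v` (`choose r (c v) ≤ 6^(r/4)` ways) fixes the orientation
of every edge at `v`, and the remaining `m - r` edges form a smaller instance.
-/

open Finset

theorem Sym2.eq_of_mem_of_iff {α : Type*} {z : Sym2 α} {v a b : α} (hv : v ∈ z) (ha : a ∈ z)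
    (hb : b ∈ z) (hab : a = v ↔ b = v) : a = b := by
  by_cases hav : a = v
  · rw [hav, hab.1 hav]
  · rw [← Sym2.congr_left (a := v), ← (Sym2.mem_and_mem_iff hav).1 ⟨ha, hv⟩,
      (Sym2.mem_and_mem_iff (mt hab.2 hav)).1 ⟨hb, hv⟩]

theorem Finset.sum_card_fiber_eq_card {α β : Type*} [Fintype α] [Fintype β] [DecidableEq β]
    (f : α → β) : ∑ b, #{a | f a = b} = Fintype.card α := by
  simp [sum_card_fiberwise_eq_card_filter]

theorem Set.ncard_setOf_eq_card_filter {α : Type*} [Fintype α] (p : α → Prop)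
    [DecidablePred p] : Set.ncard {a | p a} = #{a | p a} := by
  simp [Set.ncard_eq_toFinset_card']

theorem Fintype.card_add_card_eq_mul_card_of_card_fiber_add_eq {α β ι : Type*} [Fintype α]
    [Fintype β] [Fintype ι] [DecidableEq ι] {f : α → ι} {g : β → ι} {d : ℕ}
    (h : ∀ i, #{a | f a = i} + #{b | g b = i} = d) :
    Fintype.card α + Fintype.card β = d * Fintype.card ι := by
  rw [← sum_card_fiber_eq_card f, ← sum_card_fiber_eq_card g, ← Finset.sum_add_distrib,
    Finset.sum_congr rfl fun i _ => h i, Finset.sum_const, Finset.card_univ, smul_eq_mul,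
    mul_comm]

theorem Finset.card_filter_eq_add_card_subtype {α : Type*} [Fintype α] (p q : α → Prop)
    [DecidablePred p] [DecidablePred q] :
    #{a | q a} = #{a | p a ∧ q a} + #{a : {a // ¬ p a} | q a} := by
  rw [← Fintype.card_subtype, ← Fintype.card_subtype, ← Fintype.card_subtype,
    Fintype.card_congr (Equiv.subtypeSubtypeEquivSubtypeInter (fun a => ¬ p a) q)]
  simp only [Fintype.card_subtype]
  rw [← card_filter_add_card_filter_not (s := {a | q a}) p]
  congr 2 <;> ext <;> simp [and_comm]

theorem Sym2.sum_card_filter_mem_le {ε V : Type*} [Fintype ε] [Fintype V] [DecidableEq V]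
    (ends : ε → Sym2 V) : ∑ w, #{e | w ∈ ends e} ≤ 2 * Fintype.card ε := by
  have hdouble := sum_card_bipartiteAbove_eq_sum_card_bipartiteBelow
    (s := (univ : Finset V)) (t := (univ : Finset ε)) (fun w e => w ∈ ends e)
  simp only [bipartiteAbove, bipartiteBelow] at hdouble
  rw [hdouble, mul_comm, ← smul_eq_mul, ← card_univ]
  refine sum_le_card_nsmul _ _ _ fun e _ => ?_
  calc #{w | w ∈ ends e} = #(ends e).toFinset := by congr 1; ext; simp
    _ ≤ 2 := by rw [Sym2.card_toFinset]; split <;> omega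

theorem exists_pos_le_four_of_sum_le {ι : Type*} [Fintype ι] {c d : ι → ℕ}
    (hc : ∀ i, c i ≤ 2) (hd : ∑ i, d i ≤ 2 * ∑ i, c i) (hpos : 0 < ∑ i, c i) :
    ∃ i, 0 < c i ∧ d i ≤ 4 := by
  by_contra! h
  have hpt : ∀ i, 5 * c i ≤ 2 * d i := fun i => by
    rcases Nat.eq_zero_or_pos (c i) with h0 | h0
    · simp [h0]
    · linarith [hc i, h i h0]
  have := sum_le_sum fun i (_ : i ∈ univ) => hpt i
  rw [← mul_sum, ← mul_sum] at this
  omega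

theorem Nat.choose_le_six_rpow {r k : ℕ} (hr : r ≤ 4) (hk : k ≤ 2) :
    (r.choose k : ℝ) ≤ 6 ^ ((r : ℝ) / 4) := by
  have hpow : (r.choose k : ℝ) ^ (4 : ℝ) ≤ 6 ^ r := by
    exact_mod_cast (by interval_cases r <;> interval_cases k <;> decide : r.choose k ^ 4 ≤ 6 ^ r)
  rw [div_eq_mul_inv, Real.rpow_mul (by norm_num), Real.rpow_natCast]
  exact (Real.le_rpow_inv_iff_of_pos (by positivity) (by positivity) (by norm_num)).2 hpow

theorem Sym2.filter_eq_subset_filter_mem {ε V : Type*} [Fintype ε] [DecidableEq V]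
    {ends : ε → Sym2 V} {o : ε → V} (hends : ∀ e, o e ∈ ends e) (v : V) :
    ({e | o e = v} : Finset ε) ⊆ ({e | v ∈ ends e} : Finset ε) := fun e he => by
  rw [mem_filter] at he ⊢
  exact ⟨he.1, he.2 ▸ hends e⟩

section Orientations

variable {ε V : Type*} [Fintype ε] [DecidableEq ε] [Fintype V] [DecidableEq V]

/-- An orientation charges each edge `e` to one of its endpoints `o e`, which counts `e` among
its out-edges. -/
def orientationsWithOutdegree (ends : ε → Sym2 V) (c : V → ℕ) : Finset (ε → V) :=
  {o | (∀ e, o e ∈ ends e) ∧ ∀ w, #{e | o e = w} = c w}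

variable {ends : ε → Sym2 V} {c : V → ℕ}

theorem mem_orientationsWithOutdegree {o : ε → V} :
    o ∈ orientationsWithOutdegree ends c ↔
      (∀ e, o e ∈ ends e) ∧ ∀ w, #{e | o e = w} = c w := by
  simp [orientationsWithOutdegree]

theorem sum_outdegree_eq_card {o : ε → V} (ho : o ∈ orientationsWithOutdegree ends c) :
    ∑ w, c w = Fintype.card ε := by
  simp only [← (mem_orientationsWithOutdegree.1 ho).2, sum_card_fiber_eq_card]

theorem card_orientationsWithOutdegree_eq_sum (v : V) :
    #(orientationsWithOutdegree ends c) = ∑ S ∈ powersetCard (c v) {e | v ∈ ends e},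
      #{o ∈ orientationsWithOutdegree ends c | ({e | o e = v} : Finset ε) = S} := by
  refine card_eq_sum_card_fiberwise fun o ho => ?_
  obtain ⟨hends, hdeg⟩ := mem_orientationsWithOutdegree.1 (mem_coe.1 ho)
  exact mem_powersetCard.2 ⟨Sym2.filter_eq_subset_filter_mem hends v, hdeg v⟩

theorem exists_pos_card_filter_mem_le_four {o : ε → V}
    (ho : o ∈ orientationsWithOutdegree ends c) (hc : ∀ w, c w ≤ 2)
    (hε : 0 < Fintype.card ε) :
    ∃ v, 0 < #{e | v ∈ ends e} ∧ #{e | v ∈ ends e} ≤ 4 := by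
  obtain ⟨hends, hdeg⟩ := mem_orientationsWithOutdegree.1 ho
  have hsum := sum_outdegree_eq_card ho
  obtain ⟨v, hcv, hv⟩ := exists_pos_le_four_of_sum_le hc
    ((Sym2.sum_card_filter_mem_le ends).trans_eq (by rw [hsum])) (hsum ▸ hε)
  have hout_le : c v ≤ #{e | v ∈ ends e} :=
    hdeg v ▸ card_le_card (Sym2.filter_eq_subset_filter_mem hends v)
  exact ⟨v, hcv.trans_le hout_le, hv⟩

theorem exists_card_filter_le_card_orientationsWithOutdegree (ends : ε → Sym2 V) (c : V → ℕ)
    (v : V) (S : Finset ε) :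
    ∃ c' ≤ c, #{o ∈ orientationsWithOutdegree ends c | ({e | o e = v} : Finset ε) = S} ≤
      #(orientationsWithOutdegree (fun e : {e // v ∉ ends e} => ends e) c') := by
  set F := {o ∈ orientationsWithOutdegree ends c | ({e | o e = v} : Finset ε) = S}
  obtain hF | ⟨o₁, ho₁⟩ := F.eq_empty_or_nonempty
  · exact ⟨c, le_rfl, by simp [hF]⟩
  have hF_mem : ∀ {o}, o ∈ F ↔ (∀ e, o e ∈ ends e) ∧ (∀ w, #{e | o e = w} = c w) ∧
      ∀ e, o e = v ↔ e ∈ S := by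
    simp only [F, mem_filter, mem_orientationsWithOutdegree, Finset.ext_iff, mem_univ, true_and,
      and_assoc, implies_true]
  obtain ⟨hends₁, hdeg₁, hS₁⟩ := hF_mem.1 ho₁
  have agree : ∀ o ∈ F, ∀ e, v ∈ ends e → o e = o₁ e := fun o ho e hv =>
    have ⟨hends, _, hS⟩ := hF_mem.1 ho
    Sym2.eq_of_mem_of_iff hv (hends e) (hends₁ e) ((hS e).trans (hS₁ e).symm)
  have hsplit : ∀ (o : ε → V) w, #{e | o e = w} =
      #{e | v ∈ ends e ∧ o e = w} + #{e : {e // v ∉ ends e} | o e = w} :=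
    fun o w => card_filter_eq_add_card_subtype _ _
  refine ⟨fun w => #{e : {e // v ∉ ends e} | o₁ e = w}, fun w => ?_,
    card_le_card_of_injOn (fun o e => o e) (fun o ho => ?_) fun o ho o' ho' hoo' => ?_⟩
  · rw [← hdeg₁ w, hsplit o₁ w]
    exact Nat.le_add_left _ _
  · obtain ⟨hends, hdeg, -⟩ := hF_mem.1 ho
    refine mem_orientationsWithOutdegree.2 ⟨fun e => hends e, fun w => ?_⟩
    have hat_v : #{e | v ∈ ends e ∧ o e = w} = #{e | v ∈ ends e ∧ o₁ e = w} :=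
      congrArg card <| filter_congr fun e _ => and_congr_right fun hv => by rw [agree o ho e hv]
    dsimp only
    linarith [hsplit o w, hsplit o₁ w, hdeg w, hdeg₁ w]
  · funext e
    by_cases hv : v ∈ ends e
    · rw [agree o ho e hv, agree o' ho' e hv]
    · exact congrFun hoo' ⟨e, hv⟩

theorem card_orientationsWithOutdegree_le (ends : ε → Sym2 V) (c : V → ℕ)
    (hc : ∀ w, c w ≤ 2) :
    (#(orientationsWithOutdegree ends c) : ℝ) ≤ 6 ^ ((Fintype.card ε : ℝ) / 4) := by
  induction hm : Fintype.card ε using Nat.strong_induction_on generalizing ε c with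
  | _ m ih =>
    obtain hP | ⟨o₀, ho₀⟩ := (orientationsWithOutdegree ends c).eq_empty_or_nonempty
    · rw [hP, card_empty, Nat.cast_zero]
      positivity
    obtain rfl | hm_pos := Nat.eq_zero_or_pos m
    · have : IsEmpty ε := Fintype.card_eq_zero_iff.1 hm
      simpa using card_le_one_of_subsingleton (orientationsWithOutdegree ends c)
    obtain ⟨v, hI_pos, hI_le_four⟩ :=
      exists_pos_card_filter_mem_le_four ho₀ hc (hm ▸ hm_pos)
    set I : Finset ε := {e | v ∈ ends e}
    have hI_le : #I ≤ m := hm ▸ card_le_univ I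
    have hfibre (S : Finset ε) :
        (#{o ∈ orientationsWithOutdegree ends c | ({e | o e = v} : Finset ε) = S} : ℝ) ≤
          6 ^ (((m - #I : ℕ) : ℝ) / 4) := by
      obtain ⟨c', hc'c, hle⟩ := exists_card_filter_le_card_orientationsWithOutdegree ends c v S
      refine (Nat.cast_le.2 hle).trans (ih _ (by omega) _ c' (fun w => (hc'c w).trans (hc w)) ?_)
      rw [Fintype.card_subtype_compl, Fintype.card_subtype, hm]
    calc (#(orientationsWithOutdegree ends c) : ℝ)
        = ∑ S ∈ powersetCard (c v) I,
            (#{o ∈ orientationsWithOutdegree ends c | ({e | o e = v} : Finset ε) = S} : ℝ) :=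
          mod_cast card_orientationsWithOutdegree_eq_sum v
      _ ≤ ∑ S ∈ powersetCard (c v) I, (6 : ℝ) ^ (((m - #I : ℕ) : ℝ) / 4) :=
          sum_le_sum fun S _ => hfibre S
      _ = (#I).choose (c v) * (6 : ℝ) ^ (((m - #I : ℕ) : ℝ) / 4) := by
          rw [sum_const, card_powersetCard, nsmul_eq_mul]
      _ ≤ 6 ^ ((#I : ℝ) / 4) * (6 : ℝ) ^ (((m - #I : ℕ) : ℝ) / 4) := by
          gcongr
          exact Nat.choose_le_six_rpow hI_le_four (hc v)
      _ = 6 ^ ((m : ℝ) / 4) := by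
          rw [← Real.rpow_add (by norm_num), Nat.cast_sub hI_le]
          ring_nf

end Orientations

theorem Real.two_rpow_mul_twentyfour_rpow_mul_two_rpow_neg {k m n : ℝ} (h : m + k = 2 * n) :
    (2 : ℝ) ^ (k / 2) * 24 ^ ((2 * n - k) / 4) * 2 ^ (-n) = 6 ^ (m / 4) := by
  have hlog : Real.log 24 = 2 * Real.log 2 + Real.log 6 := by
    rw [show (24 : ℝ) = 2 ^ 2 * 6 by norm_num, Real.log_mul (by norm_num) (by norm_num),
      Real.log_pow, Nat.cast_ofNat]
  simp only [Real.rpow_def_of_pos (by norm_num : (0 : ℝ) < 2),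
    Real.rpow_def_of_pos (by norm_num : (0 : ℝ) < 24),
    Real.rpow_def_of_pos (by norm_num : (0 : ℝ) < 6), ← Real.exp_add, hlog]
  congr 1
  rw [show n = (m + k) / 2 by linarith]
  ring

theorem pseudograph_bregman_minc_bound_general
    {V H : Type*} [Fintype V] [Fintype H]
    (G : SimpleGraph V) (hend : H → V) :
    (Set.ncard {o : G.edgeSet → V |
        (∀ e : G.edgeSet, o e ∈ (e : Sym2 V)) ∧
        ∀ v : V, Set.ncard {e : G.edgeSet | o e = v}
          + Set.ncard {h : H | hend h = v} = 2} : ℝ)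
      ≤ (2 : ℝ) ^ ((Fintype.card H : ℝ) / 2) *
        (24 : ℝ) ^ ((2 * (Fintype.card V : ℝ) - (Fintype.card H : ℝ)) / 4) *
        (2 : ℝ) ^ (-(Fintype.card V : ℝ)) := by
  classical
  simp only [Set.ncard_setOf_eq_card_filter]
  set Ω : Finset (G.edgeSet → V) := {o | (∀ e : G.edgeSet, o e ∈ (e : Sym2 V)) ∧
    ∀ v, #{e | o e = v} + #{h | hend h = v} = 2}
  obtain hempty | ⟨o₀, ho₀⟩ := Ω.eq_empty_or_nonempty
  · rw [hempty, card_empty, Nat.cast_zero]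
    positivity
  have hcard := Fintype.card_add_card_eq_mul_card_of_card_fiber_add_eq (mem_filter.1 ho₀).2.2
  have hsub : Ω ⊆ orientationsWithOutdegree (fun e : G.edgeSet => (e : Sym2 V))
      (fun v => 2 - #{h | hend h = v}) := fun o ho => by
    obtain ⟨-, hends, hdeg⟩ := mem_filter.1 ho
    exact mem_orientationsWithOutdegree.2 ⟨hends, fun w => by have := hdeg w; omega⟩
  calc (#Ω : ℝ) ≤ #(orientationsWithOutdegree _ _) := by exact_mod_cast card_le_card hsub
    _ ≤ 6 ^ ((Fintype.card G.edgeSet : ℝ) / 4) :=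
      card_orientationsWithOutdegree_le _ _ fun w => Nat.sub_le _ _
    _ = _ := (Real.two_rpow_mul_twentyfour_rpow_mul_two_rpow_neg (by exact_mod_cast hcard)).symm

/-- Brègman–Minc bound for pseudograph orientations: for every connected
pseudograph with `n` vertices and `k` hanging edges (normal subgraph `G`,
hanging edges `H` with endpoint map `hend`), the number of constrained
orientations in which every vertex has total outdegree exactly 2 is at most
`2^(k/2) · 24^((2n-k)/4) · 2^(-n)`. -/
theorem pseudograph_bregman_minc_bound
    {V H : Type*} [Fintype V] [Fintype H]
    (G : SimpleGraph V) (hend : H → V)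
    (hconn : G.Connected) :
    (Set.ncard {o : G.edgeSet → V |
        (∀ e : G.edgeSet, o e ∈ (e : Sym2 V)) ∧
        ∀ v : V, Set.ncard {e : G.edgeSet | o e = v}
          + Set.ncard {h : H | hend h = v} = 2} : ℝ)
      ≤ (2 : ℝ) ^ ((Fintype.card H : ℝ) / 2) *
        (24 : ℝ) ^ ((2 * (Fintype.card V : ℝ) - (Fintype.card H : ℝ)) / 4) *
        (2 : ℝ) ^ (-(Fintype.card V : ℝ)) :=
  pseudograph_bregman_minc_bound_general G hend
end

section
/- Let d ≥ 2 and define α_d(p) = (2^{p-d} · (p choose d)^{2d-3})^{1/(2p-3)} for integers p ≥ d. Then for all p ≥ d with p ≥ 2d, the ratio α_d(p)/α_d(p+1) = W(p)^{(2d-3)/((2p-1)(2p-3))} where W(p) = (1/2)·(p choose d)^2 · ((p-d+1)/(p+1))^{2p-3}, and W(p) is strictly increasing in p for p ≥ d. -/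
noncomputable section

/-- `W(p) = (1/2)·(p choose d)² · ((p-d+1)/(p+1))^(2p-3)`. -/
def Wfun (d p : ℕ) : ℝ :=
  (1 / 2) * (p.choose d : ℝ) ^ 2 *
    ((((p : ℝ) - (d : ℝ) + 1) / ((p : ℝ) + 1)) ^ (2 * (p : ℝ) - 3))

/-- `α_d(p) = (2^(p-d) · (p choose d)^(2d-3))^(1/(2p-3))`. -/
def alphaFun (d p : ℕ) : ℝ :=
  ((2 : ℝ) ^ ((p : ℝ) - (d : ℝ)) *
      (p.choose d : ℝ) ^ (2 * (d : ℝ) - 3)) ^ (1 / (2 * (p : ℝ) - 3))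

lemma choose_pos_real {d p : ℕ} (hdp : d ≤ p) : (0:ℝ) < (p.choose d : ℝ) := by
  exact_mod_cast Nat.choose_pos hdp

lemma sub_cast_pos {d p : ℕ} (hdp : d ≤ p) : (0:ℝ) < (p : ℝ) - (d : ℝ) + 1 := by
  have : (d:ℝ) ≤ (p:ℝ) := by exact_mod_cast hdp
  linarith

lemma Wfun_pos {d p : ℕ} (hdp : d ≤ p) : 0 < Wfun d p := by
  have hc := choose_pos_real hdp
  have h1 := sub_cast_pos hdp
  have h2 : (0:ℝ) < (p:ℝ) + 1 := by positivity
  unfold Wfun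
  positivity

lemma alphaFun_pos {d p : ℕ} (hdp : d ≤ p) : 0 < alphaFun d p := by
  have hc := choose_pos_real hdp
  unfold alphaFun
  positivity

lemma logW (d p : ℕ) (hdp : d ≤ p) :
    Real.log (Wfun d p) =
      -Real.log 2 + 2 * Real.log (p.choose d : ℝ)
        + (2 * (p : ℝ) - 3) *
          (Real.log ((p : ℝ) - (d : ℝ) + 1) - Real.log ((p : ℝ) + 1)) := by
  have hc := choose_pos_real hdp
  have h1 := sub_cast_pos hdp
  have h2 : (0:ℝ) < (p:ℝ) + 1 := by positivity
  have hbase : (0:ℝ) < ((p : ℝ) - (d : ℝ) + 1) / ((p : ℝ) + 1) := div_pos h1 h2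
  unfold Wfun
  rw [Real.log_mul (by positivity) (by positivity),
    Real.log_mul (by norm_num) (by positivity),
    Real.log_rpow hbase, Real.log_div (ne_of_gt h1) (ne_of_gt h2), Real.log_pow,
    one_div, Real.log_inv]
  push_cast
  ring

lemma logAlpha (d p : ℕ) (hdp : d ≤ p) :
    Real.log (alphaFun d p) =
      (1 / (2 * (p : ℝ) - 3)) *
        (((p : ℝ) - (d : ℝ)) * Real.log 2
          + (2 * (d : ℝ) - 3) * Real.log (p.choose d : ℝ)) := by
  have hc := choose_pos_real hdp
  have h2 : (0:ℝ) < (2:ℝ) ^ ((p : ℝ) - (d : ℝ)) := Real.rpow_pos_of_pos (by norm_num) _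
  have h3 : (0:ℝ) < (p.choose d : ℝ) ^ (2 * (d : ℝ) - 3) := Real.rpow_pos_of_pos hc _
  unfold alphaFun
  rw [Real.log_rpow (by positivity), Real.log_mul (ne_of_gt h2) (ne_of_gt h3),
    Real.log_rpow (by norm_num), Real.log_rpow hc]

lemma log_choose_succ (d p : ℕ) (hdp : d ≤ p) :
    Real.log (((p + 1).choose d : ℝ)) =
      Real.log (p.choose d : ℝ) + Real.log ((p : ℝ) + 1)
        - Real.log ((p : ℝ) - (d : ℝ) + 1) := by
  have hc := choose_pos_real hdp
  have hc' := choose_pos_real (hdp.trans (Nat.le_succ p))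
  have h1 := sub_cast_pos hdp
  have h2 : (0:ℝ) < (p:ℝ) + 1 := by positivity
  have key : (p.choose d : ℝ) * ((p : ℝ) + 1)
      = ((p + 1).choose d : ℝ) * ((p : ℝ) - (d : ℝ) + 1) := by
    have := Nat.choose_mul_succ_eq p d
    have hcast := congrArg (Nat.cast : ℕ → ℝ) this
    have hd1 : d ≤ p + 1 := hdp.trans (Nat.le_succ p)
    push_cast [Nat.cast_sub hd1] at hcast
    linarith [hcast]
  have := congrArg Real.log key
  rw [Real.log_mul (ne_of_gt hc) (ne_of_gt h2),
    Real.log_mul (ne_of_gt hc') (ne_of_gt h1)] at this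
  linarith [this]

/-- For `d ≥ 2` and all integers `p ≥ d` with `p ≥ 2d`, the ratio
`α_d(p)/α_d(p+1)` equals `W(p)^((2d-3)/((2p-1)(2p-3)))`, and `W(p)` is
strictly increasing in `p` for `p ≥ d`. -/
theorem alpha_ratio_and_W_increasing (d : ℕ) (hd : 2 ≤ d) :
    (∀ p : ℕ, d ≤ p → 2 * d ≤ p →
      alphaFun d p / alphaFun d (p + 1)
        = Wfun d p ^ ((2 * (d : ℝ) - 3) / ((2 * (p : ℝ) - 1) * (2 * (p : ℝ) - 3)))) ∧
    (∀ p : ℕ, d ≤ p → Wfun d p < Wfun d (p + 1)) := by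
  have hdR : (2:ℝ) ≤ (d:ℝ) := by exact_mod_cast hd
  constructor
  · intro p hdp hdp2
    have hxR : (2:ℝ) * (d:ℝ) ≤ (p:ℝ) := by exact_mod_cast hdp2
    have h3 : (0:ℝ) < 2 * (p:ℝ) - 3 := by linarith
    have h1 : (0:ℝ) < 2 * (p:ℝ) - 1 := by linarith
    have hA1 := alphaFun_pos hdp
    have hA2 := alphaFun_pos (hdp.trans (Nat.le_succ p))
    have hW := Wfun_pos hdp
    have hR : (0:ℝ) < Wfun d p ^ ((2 * (d : ℝ) - 3) / ((2 * (p : ℝ) - 1) * (2 * (p : ℝ) - 3))) :=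
      Real.rpow_pos_of_pos hW _
    have hL : (0:ℝ) < alphaFun d p / alphaFun d (p + 1) := div_pos hA1 hA2
    rw [← Real.exp_log hL, ← Real.exp_log hR]
    congr 1
    rw [Real.log_div (ne_of_gt hA1) (ne_of_gt hA2), Real.log_rpow hW,
      logAlpha d p hdp, logAlpha d (p + 1) (hdp.trans (Nat.le_succ p)),
      logW d p hdp, log_choose_succ d p hdp]
    push_cast
    have h3' : 2 * (p:ℝ) - 3 ≠ 0 := ne_of_gt h3
    have h1' : 2 * ((p:ℝ) + 1) - 3 ≠ 0 := by
      intro h; apply ne_of_gt h1; linarith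
    field_simp
    ring
  · intro p hdp
    have hpR : (d:ℝ) ≤ (p:ℝ) := by exact_mod_cast hdp
    have hW1 := Wfun_pos hdp
    have hW2 := Wfun_pos (hdp.trans (Nat.le_succ p))
    have h1 := sub_cast_pos hdp
    have h2 : (0:ℝ) < (p:ℝ) + 1 := by positivity
    have h1' : (0:ℝ) < (p:ℝ) - (d:ℝ) + 2 := by linarith
    have h2' : (0:ℝ) < (p:ℝ) + 2 := by linarith
    have hx1 : (0:ℝ) < 2 * (p:ℝ) - 1 := by linarith
    have hlog : Real.log (((p:ℝ) - (d:ℝ) + 1) * ((p:ℝ) + 2))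
        < Real.log (((p:ℝ) + 1) * ((p:ℝ) - (d:ℝ) + 2)) := by
      apply Real.log_lt_log (by positivity)
      nlinarith
    rw [Real.log_mul (ne_of_gt h1) (ne_of_gt h2'),
      Real.log_mul (ne_of_gt h2) (ne_of_gt h1')] at hlog
    rw [← Real.exp_log hW1, ← Real.exp_log hW2, Real.exp_lt_exp,
      logW d p hdp, logW d (p + 1) (hdp.trans (Nat.le_succ p)),
      log_choose_succ d p hdp]
    push_cast
    ring_nf
    ring_nf at hlog
    nlinarith [mul_pos hx1 (sub_pos.mpr hlog)]
end
end

section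
/- For α_3 = 4·(5/8)^{1/3} = (64000)^{1/9} (the maximum over p ≥ 3 of (2^{p-3}·(p choose 3)^3)^{1/(2p-3)}, attained at p = 6 with value (2^3 · 20^3)^{1/9}) and β_3 = (2·20^{-2})^{1/9} = (1/200)^{1/9}, the inequalities α_3 · β_3^{3+h-p} ≥ (p-h choose 3-h) hold for all integers p ≥ 3 ≥ h ≥ 0 with (p,h) ∉ {(4,2),(3,3)}, and α_3^ℓ · β_3^{2ℓ-1} ≥ 2 holds for all integers ℓ ≥ 2. -/
private lemma step9 {a b M : ℕ} (h : 5*b ≤ 9*a) (ha : a^9 ≤ M) : b^9 ≤ 200*M := by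
  have h9 : (5*b)^9 ≤ (9*a)^9 := Nat.pow_le_pow_left h 9
  rw [mul_pow, mul_pow] at h9
  have h2 : 5^9 * b^9 ≤ 9^9 * M := h9.trans (Nat.mul_le_mul_left _ ha)
  have h3 : 5^9 * b^9 ≤ 5^9 * (200*M) := h2.trans (by nlinarith)
  exact Nat.le_of_mul_le_mul_left h3 (by norm_num)

private lemma ch2 (n : ℕ) : 2 * ((n+2).choose 2) = (n+1)*(n+2) := by
  induction n with
  | zero => decide
  | succ m ih =>
    have e : (m+1+2).choose 2 = (m+2).choose 1 + (m+2).choose 2 := Nat.choose_succ_succ _ _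
    rw [e, Nat.choose_one_right, Nat.mul_add, ih]
    ring

private lemma ch3 (n : ℕ) : 6 * ((n+3).choose 3) = (n+1)*(n+2)*(n+3) := by
  induction n with
  | zero => decide
  | succ m ih =>
    have h2 := ch2 (m+1)
    have e : (m+1+3).choose 3 = (m+3).choose 2 + (m+3).choose 3 := Nat.choose_succ_succ _ _
    rw [e, Nat.mul_add, ih]
    calc 6 * ((m+3).choose 2) + (m+1)*(m+2)*(m+3)
        = 3 * (2 * ((m+1+2).choose 2)) + (m+1)*(m+2)*(m+3) := by ring_nf
      _ = 3 * ((m+2)*(m+3)) + (m+1)*(m+2)*(m+3) := by rw [h2]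
      _ = (m+1+1)*(m+1+2)*(m+1+3) := by ring

private lemma natA (n : ℕ) : (n+3)^9 ≤ 64000 * 200^n := by
  induction n with
  | zero => norm_num
  | succ m ih =>
    have := step9 (a := m+3) (b := m+4) (by omega) ih
    calc (m+1+3)^9 = (m+4)^9 := by ring_nf
      _ ≤ 200*(64000*200^m) := this
      _ = 64000 * 200^(m+1) := by ring

private lemma natB' (m : ℕ) : ((m+3)*(m+4))^9 ≤ 512*(64000*200^(m+1)) := by
  induction m with
  | zero => norm_num
  | succ k ih =>
    have hr : 5*((k+4)*(k+5)) ≤ 9*((k+3)*(k+4)) := by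
      calc 5*((k+4)*(k+5)) = (k+4)*(5*(k+5)) := by ring
        _ ≤ (k+4)*(9*(k+3)) := Nat.mul_le_mul_left _ (by omega)
        _ = 9*((k+3)*(k+4)) := by ring
    have := step9 (a := (k+3)*(k+4)) (b := (k+4)*(k+5)) hr ih
    calc ((k+1+3)*(k+1+4))^9 = ((k+4)*(k+5))^9 := by ring_nf
      _ ≤ 200*(512*(64000*200^(k+1))) := this
      _ = 512*(64000*200^(k+1+1)) := by ring

private lemma natB (n : ℕ) : ((n+2)*(n+3))^9 ≤ 512*(64000*200^n) := by
  match n with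
  | 0 => norm_num
  | (m+1) =>
    have := natB' m
    calc ((m+1+2)*(m+1+3))^9 = ((m+3)*(m+4))^9 := by ring_nf
      _ ≤ 512*(64000*200^(m+1)) := this

private lemma natC' (m : ℕ) : ((m+4)*(m+5)*(m+6))^9 ≤ 10077696*(64000*200^(m+3)) := by
  induction m with
  | zero => norm_num
  | succ k ih =>
    have hr : 5*((k+5)*(k+6)*(k+7)) ≤ 9*((k+4)*(k+5)*(k+6)) := by
      calc 5*((k+5)*(k+6)*(k+7)) = (k+5)*(k+6)*(5*(k+7)) := by ring
        _ ≤ (k+5)*(k+6)*(9*(k+4)) := Nat.mul_le_mul_left _ (by omega)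
        _ = 9*((k+4)*(k+5)*(k+6)) := by ring
    have := step9 (a := (k+4)*(k+5)*(k+6)) (b := (k+5)*(k+6)*(k+7)) hr ih
    calc ((k+1+4)*(k+1+5)*(k+1+6))^9 = ((k+5)*(k+6)*(k+7))^9 := by ring_nf
      _ ≤ 200*(10077696*(64000*200^(k+3))) := this
      _ = 10077696*(64000*200^(k+1+3)) := by ring

private lemma natC (n : ℕ) : ((n+1)*(n+2)*(n+3))^9 ≤ 10077696*(64000*200^n) := by
  match n with
  | 0 => norm_num
  | 1 => norm_num
  | 2 => norm_num
  | (m+3) =>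
    have := natC' m
    calc ((m+3+1)*(m+3+2)*(m+3+3))^9 = ((m+4)*(m+5)*(m+6))^9 := by ring_nf
      _ ≤ 10077696*(64000*200^(m+3)) := this

private lemma natL (m : ℕ) : 512 * 200^(2*m+3) ≤ 64000^(m+2) := by
  induction m with
  | zero => norm_num
  | succ k ih =>
    calc 512 * 200^(2*(k+1)+3) = 40000 * (512 * 200^(2*k+3)) := by ring
      _ ≤ 40000 * 64000^(k+2) := Nat.mul_le_mul_left _ ih
      _ ≤ 64000 * 64000^(k+2) := Nat.mul_le_mul_right _ (by norm_num)
      _ = 64000^(k+1+2) := by ring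

private lemma glue (c : ℕ) (s : ℝ) (h : ((c:ℝ))^(9:ℕ) ≤ 64000 * (200:ℝ)^(-s)) :
    (c:ℝ) ≤ (64000:ℝ)^((1:ℝ)/9) * ((200:ℝ)^(-(1:ℝ)/9))^s := by
  have h200 : (0:ℝ) ≤ 200 := by norm_num
  have e1 : ((200:ℝ)^(-(1:ℝ)/9))^s = ((200:ℝ)^(-s))^((1:ℝ)/9) := by
    rw [← Real.rpow_mul h200, ← Real.rpow_mul h200]
    congr 1
    ring
  rw [e1, ← Real.mul_rpow (by norm_num) (Real.rpow_nonneg h200 _)]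
  have hc : (c:ℝ) = (((c:ℝ))^(9:ℕ))^((1:ℝ)/9) := by
    rw [← Real.rpow_natCast (c:ℝ) 9, ← Real.rpow_mul (Nat.cast_nonneg c)]
    norm_num
  rw [hc]
  exact Real.rpow_le_rpow (by positivity) h (by norm_num)

private lemma small (t : ℝ) (ht : -2 ≤ t) : (1:ℝ) ≤ 64000 * (200:ℝ)^t := by
  have e : (200:ℝ)^(-2:ℝ) = 1/40000 := by
    rw [show (-2:ℝ) = -((2:ℕ):ℝ) by norm_num, Real.rpow_neg (by norm_num),
      Real.rpow_natCast]
    norm_num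
  have h1 : (200:ℝ)^(-2:ℝ) ≤ 200^t := by
    apply Real.rpow_le_rpow_left_iff (by norm_num : (1:ℝ) < 200) |>.mpr ht
  rw [e] at h1
  linarith

private lemma castpow (c n : ℕ) (t : ℝ) (ht : t = n) (hn : c^9 ≤ 64000 * 200^n) :
    ((c:ℝ))^(9:ℕ) ≤ 64000 * (200:ℝ)^t := by
  rw [ht, Real.rpow_natCast]
  exact_mod_cast hn

private lemma cancel {k : ℕ} (c M : ℕ) (hk : 0 < k) (h : k * c^9 ≤ k * M) : c^9 ≤ M :=
  Nat.le_of_mul_le_mul_left h hk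

/-- The `d = 3` elimination inequalities. With `α₃ = 4·(5/8)^(1/3) = 64000^(1/9)`
(the maximum of `(2^(p-3)·(p choose 3)³)^(1/(2p-3))` over `p ≥ 3`, attained at
`p = 6`) and `β₃ = (2·20⁻²)^(1/9) = 200^(-1/9)`:
the vertex-elimination inequalities `α₃ · β₃^(3+h-p) ≥ (p-h choose 3-h)` hold
for all integers `p ≥ 3 ≥ h ≥ 0` with `(p,h) ∉ {(4,2),(3,3)}`, and the
path-elimination inequalities `α₃^ℓ · β₃^(2ℓ-1) ≥ 2` hold for all `ℓ ≥ 2`. -/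
theorem geiringer_elimination_inequalities :
    (∀ p h : ℕ, 3 ≤ p → h ≤ 3 →
      ¬ (p = 4 ∧ h = 2) → ¬ (p = 3 ∧ h = 3) →
      (((p - h).choose (3 - h) : ℝ))
        ≤ (64000 : ℝ) ^ ((1 : ℝ) / 9) *
          ((200 : ℝ) ^ (-(1 : ℝ) / 9)) ^ ((3 : ℝ) + (h : ℝ) - (p : ℝ))) ∧
    (∀ ℓ : ℕ, 2 ≤ ℓ →
      (2 : ℝ) ≤ ((64000 : ℝ) ^ ((1 : ℝ) / 9)) ^ (ℓ : ℝ) *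
        ((200 : ℝ) ^ (-(1 : ℝ) / 9)) ^ (2 * (ℓ : ℝ) - 1)) := by
  constructor
  · intro p h hp hh hne1 hne2
    apply glue
    interval_cases h
    · -- h = 0
      obtain ⟨n, rfl⟩ : ∃ n, p = n + 3 := ⟨p - 3, by omega⟩
      apply castpow _ n
      · push_cast; ring
      · have key : 6^9 * ((n+3).choose 3)^9 ≤ 6^9 * (64000*200^n) := by
          have h9 : (6 * ((n+3).choose 3))^9 ≤ 10077696*(64000*200^n) := by
            rw [ch3 n]; exact natC n
          rw [mul_pow] at h9
          calc 6^9 * ((n+3).choose 3)^9 ≤ 10077696*(64000*200^n) := h9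
            _ = 6^9 * (64000*200^n) := by norm_num
        have := cancel _ _ (by norm_num : 0 < 6^9) key
        simpa using this
    · -- h = 1
      by_cases hp3 : p = 3
      · subst hp3
        simpa using small (-(3 + ((1:ℕ):ℝ) - ((3:ℕ):ℝ))) (by push_cast; norm_num)
      · obtain ⟨n, rfl⟩ : ∃ n, p = n + 4 := ⟨p - 4, by omega⟩
        apply castpow _ n
        · push_cast; ring
        · have key : 2^9 * ((n+3).choose 2)^9 ≤ 2^9 * (64000*200^n) := by
            have h9 : (2 * ((n+3).choose 2))^9 ≤ 512*(64000*200^n) := by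
              rw [show n+3 = n+1+2 from rfl, ch2 (n+1)]
              exact natB n
            rw [mul_pow] at h9
            calc 2^9 * ((n+3).choose 2)^9 ≤ 512*(64000*200^n) := h9
              _ = 2^9 * (64000*200^n) := by norm_num
          have hch : (n + 4 - 1).choose (3 - 1) = (n+3).choose 2 := by norm_num
          rw [hch]
          exact cancel _ _ (by norm_num : 0 < 2^9) key
    · -- h = 2
      by_cases hp3 : p = 3
      · subst hp3
        simpa using small (-(3 + ((2:ℕ):ℝ) - ((3:ℕ):ℝ))) (by push_cast; norm_num)
      · have hp5 : 5 ≤ p := by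
          rcases Nat.lt_or_ge p 5 with h5 | h5
          · interval_cases p <;> simp_all
          · exact h5
        obtain ⟨n, rfl⟩ : ∃ n, p = n + 5 := ⟨p - 5, by omega⟩
        apply castpow _ n
        · push_cast; ring
        · have hch : (n + 5 - 2).choose (3 - 2) = n + 3 := by
            simp [Nat.choose_one_right]
          rw [hch]
          exact natA n
    · -- h = 3
      have hp4 : 4 ≤ p := by omega
      have hcast : (4:ℝ) ≤ p := by exact_mod_cast hp4
      have hch : (p - 3).choose (3 - 3) = 1 := Nat.choose_zero_right _
      rw [hch]
      simpa using small (-(3 + ((3:ℕ):ℝ) - (p:ℝ))) (by push_cast; linarith)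
  · intro ℓ hℓ
    obtain ⟨m, rfl⟩ : ∃ m, ℓ = m + 2 := ⟨ℓ - 2, by omega⟩
    have h200 : (0:ℝ) ≤ 200 := by norm_num
    have e1 : ((64000:ℝ)^((1:ℝ)/9))^(((m+2:ℕ)):ℝ) = ((64000:ℝ)^(m+2:ℕ))^((1:ℝ)/9) := by
      rw [← Real.rpow_natCast (64000:ℝ) (m+2), ← Real.rpow_mul (by norm_num),
        ← Real.rpow_mul (by norm_num)]
      congr 1
      ring
    have e2 : ((200:ℝ)^(-(1:ℝ)/9))^(2*(((m+2:ℕ)):ℝ)-1)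
        = (((200:ℝ)^(2*m+3:ℕ))⁻¹)^((1:ℝ)/9) := by
      have : (((200:ℝ)^(2*m+3:ℕ))⁻¹) = (200:ℝ)^(-(((2*m+3:ℕ)):ℝ)) := by
        rw [Real.rpow_neg h200, Real.rpow_natCast]
      rw [this, ← Real.rpow_mul h200, ← Real.rpow_mul h200]
      congr 1
      push_cast
      ring
    rw [e1, e2, ← Real.mul_rpow (by positivity) (by positivity)]
    have h2 : (2:ℝ) = ((2:ℝ)^(9:ℕ))^((1:ℝ)/9) := by
      rw [← Real.rpow_natCast (2:ℝ) 9, ← Real.rpow_mul (by norm_num)]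
      norm_num
    rw [h2]
    apply Real.rpow_le_rpow (by positivity) _ (by norm_num)
    rw [← div_eq_mul_inv, le_div_iff₀ (by positivity)]
    have := natL m
    calc (2:ℝ)^(9:ℕ) * 200^(2*m+3) = 512 * 200^(2*m+3) := by norm_num
      _ ≤ 64000^(m+2) := by exact_mod_cast this
end
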